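/- Let f ∈ L²(hℤ^d) be such that the function x ↦ x_j f(x) also belongs to L²(hℤ^d), for some j ∈ {1,…,d}. Then for every t ∈ ℝ, the function x ↦ x_j (e^{itΔ_h} f)(x) belongs to L²(hℤ^d) and, for every x ∈ hℤ^d, x_j (e^{itΔ_h} f)(x) − (e^{itΔ_h}(x_j f))(x) = −2it · (D_j (e^{itΔ_h} f))(x), where (D_j g)(x) := (g(x + h e_j) − g(x − h e_j))/(2h) is the centered difference operator (the Fourier multiplier with symbol (i/h) sin(h ξ_j)). -/

import Mathlib

/-!
On `ℓ²(ℤ^d)` the discrete Laplacian is a bounded operator, so `e^{itΔ_h}` is the exponential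
series converging in operator norm, and evaluating it at a lattice point gives the pointwise series
`flowZ`. Multiplication by `x_j` is unbounded, but `[Δ_h, x_j] = h⁻¹ (τ_{e_j} - τ_{-e_j})` with
`τ_v f = f(· + v)`, and this commutes with `Δ_h`; hence `[Δ_h^{k+1}, x_j] = (k+1) Δ_h^k [Δ_h, x_j]`.
Summing the exponential series term by term gives
`e^{itΔ_h}(x_j f) = x_j e^{itΔ_h} f + (it/h) (τ_{e_j} - τ_{-e_j}) e^{itΔ_h} f`,
and every term other than `x_j e^{itΔ_h} f` is already known to lie in `ℓ²`.
-/

open Real Finset MeasureTheory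
open scoped ENNReal Classical BigOperators

noncomputable section

namespace DNLS

/-- Index set of the finite lattice `Ω = {h·m : |m_j| ≤ K·R}`. -/
def lat (d K R : ℕ) : Finset (Fin d → ℤ) :=
  Fintype.piFinset fun _ => Finset.Icc (-(K * R : ℤ)) (K * R : ℤ)

/-- Boundary points of `Ω` (some coordinate equals `±πR`, i.e. `m_j = ±K·R`). -/
def IsBoundary (d K R : ℕ) (n : Fin d → ℤ) : Prop :=
  ∃ j : Fin d, n j = (K * R : ℤ) ∨ n j = -(K * R : ℤ)

/-- A function on the lattice (extended by zero) vanishing on the boundary and outside `Ω`. -/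
def VanishingOn (d K R : ℕ) (f : (Fin d → ℤ) → ℂ) : Prop :=
  ∀ n : Fin d → ℤ, (n ∉ lat d K R ∨ IsBoundary d K R n) → f n = 0

/-- Discrete Dirichlet Laplacian `Δ_Ω` (grid size `h`); position `x = h·n`. -/
def lapO (d K R : ℕ) (h : ℝ) (f : (Fin d → ℤ) → ℂ) (n : Fin d → ℤ) : ℂ :=
  if n ∈ lat d K R ∧ ¬IsBoundary d K R n then
    (1 / (h : ℂ) ^ 2) * ∑ j : Fin d,
      (f (Function.update n j (n j + 1)) + f (Function.update n j (n j - 1)) - 2 * f n)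
  else 0

/-- Frequency index set: `ξ = m/(2R)` with `1 ≤ m_j ≤ 2KR - 1`. -/
def freq (d K R : ℕ) : Finset (Fin d → ℤ) :=
  Fintype.piFinset fun _ => Finset.Icc (1 : ℤ) (2 * K * R - 1 : ℤ)

/-- Eigenfunction `e(x, ξ)` with `x = h·n`, `ξ = m/(2R)`. -/
def efun (d K R : ℕ) (h : ℝ) (m n : Fin d → ℤ) : ℂ :=
  (((π * (R : ℝ)) ^ (-(d : ℝ) / 2) *
      ∏ j : Fin d, Real.sin ((h * (n j : ℝ) + π * (R : ℝ)) * ((m j : ℝ) / (2 * (R : ℝ)))) : ℝ) : ℂ)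

/-- Fourier symbol `P_h(ξ) = (4/h²) Σ_j sin²(h ξ_j / 2)`, `ξ = m/(2R)`. -/
def symb (d R : ℕ) (h : ℝ) (m : Fin d → ℤ) : ℝ :=
  (4 / h ^ 2) * ∑ j : Fin d, Real.sin (h * ((m j : ℝ) / (2 * (R : ℝ))) / 2) ^ 2

/-- Inner product `⟨f, g⟩ = h^d Σ_{x∈Ω} f(x) conj(g(x))`. -/
def inn (d K R : ℕ) (h : ℝ) (f g : (Fin d → ℤ) → ℂ) : ℂ :=
  (h : ℂ) ^ d * ∑ n ∈ lat d K R, f n * (starRingEnd ℂ) (g n)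

/-- Schrödinger flow `e^{itΔ_Ω} f = Σ_{ξ∈Ω*} e^{-itP_h(ξ)} ⟨f, e(·,ξ)⟩ e(·,ξ)`. -/
def flowO (d K R : ℕ) (h t : ℝ) (f : (Fin d → ℤ) → ℂ) (n : Fin d → ℤ) : ℂ :=
  ∑ m ∈ freq d K R,
    Complex.exp (-Complex.I * (t : ℂ) * (symb d R h m : ℂ)) *
      inn d K R h f (efun d K R h m) * efun d K R h m n

/-- `L^p(Ω)` norm, `p ∈ [1,∞]`. -/
def LpO (d K R : ℕ) (h : ℝ) (p : ℝ≥0∞) (f : (Fin d → ℤ) → ℂ) : ℝ :=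
  if p = ⊤ then ⨆ n ∈ lat d K R, ‖f n‖
  else (h ^ d * ∑ n ∈ lat d K R, ‖f n‖ ^ p.toReal) ^ (1 / p.toReal)

/-- Sobolev norm `H^s(Ω)`. -/
def HsO (d K R : ℕ) (h s : ℝ) (f : (Fin d → ℤ) → ℂ) : ℝ :=
  (∑ m ∈ freq d K R,
      (1 + symb d R h m) ^ s * ‖inn d K R h f (efun d K R h m)‖ ^ 2) ^ (1 / 2 : ℝ)

/-- `N_* = 2^(⌈log₂(h/π)⌉ - 1)`. -/
def Nstar (h : ℝ) : ℝ := (2 : ℝ) ^ (⌈Real.logb 2 (h / π)⌉ - 1)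

/-- `N` is dyadic with `N_* ≤ N ≤ 1`. -/
def IsDyadic (h N : ℝ) : Prop := (∃ k : ℤ, N = (2 : ℝ) ^ k) ∧ Nstar h ≤ N ∧ N ≤ 1

/-- Projection `P_{≤N}` onto frequencies with `max_j ξ_j ≤ πN/h`. -/
def projLE (d K R : ℕ) (h N : ℝ) (f : (Fin d → ℤ) → ℂ) (n : Fin d → ℤ) : ℂ :=
  ∑ m ∈ (freq d K R).filter (fun m => ∀ j : Fin d, (m j : ℝ) / (2 * (R : ℝ)) ≤ π * N / h),
    inn d K R h f (efun d K R h m) * efun d K R h m n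

/-- Littlewood–Paley projection `P_N` (with `P_{N_*} = 0`). -/
def projN (d K R : ℕ) (h N : ℝ) (f : (Fin d → ℤ) → ℂ) : (Fin d → ℤ) → ℂ :=
  if N = Nstar h then 0
  else fun n =>
    ∑ m ∈ (freq d K R).filter (fun m =>
        (∀ j : Fin d, (m j : ℝ) / (2 * (R : ℝ)) ≤ π * N / h) ∧
        ∃ j : Fin d, π * N / (2 * h) < (m j : ℝ) / (2 * (R : ℝ))),
      inn d K R h f (efun d K R h m) * efun d K R h m n

/-- Time `L^q` norm on `[a,b]`, `q ∈ [1,∞]` (essential sup when `q = ∞`). -/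
def timeLq (q : ℝ≥0∞) (a b : ℝ) (g : ℝ → ℝ) : ℝ :=
  if q = ⊤ then essSup g (volume.restrict (Set.Ioc a b))
  else (∫ t in a..b, g t ^ q.toReal) ^ (1 / q.toReal)

/-- `‖∇_Ω f‖²_{L²(Ω)}` (forward differences, zero at the boundary). -/
def gradSqO (d K R : ℕ) (h : ℝ) (f : (Fin d → ℤ) → ℂ) : ℝ :=
  h ^ d * ∑ n ∈ lat d K R,
    if n ∈ lat d K R ∧ ¬IsBoundary d K R n then
      ∑ j : Fin d, ‖(f (Function.update n j (n j + 1)) - f n) / (h : ℂ)‖ ^ 2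
    else 0

/-- Weighted norm `‖x f‖_{L²(Ω)}`. -/
def xnormO (d K R : ℕ) (h : ℝ) (f : (Fin d → ℤ) → ℂ) : ℝ :=
  (h ^ d * ∑ n ∈ lat d K R,
      (∑ j : Fin d, (h * (n j : ℝ)) ^ 2) * ‖f n‖ ^ 2) ^ (1 / 2 : ℝ)

/-- Weighted Sobolev norm `H^{1,1}(Ω)`. -/
def H11O (d K R : ℕ) (h : ℝ) (f : (Fin d → ℤ) → ℂ) : ℝ :=
  Real.sqrt ((HsO d K R h 1 f) ^ 2 + (xnormO d K R h f) ^ 2)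

/-- `w` is a (global, `C¹` in time) solution of the discrete NLS
`i ∂_t w = -Δ_Ω w + |w|² w` on the finite lattice `Ω`. -/
def IsSolutionO (d K R : ℕ) (h : ℝ) (w : ℝ → (Fin d → ℤ) → ℂ) : Prop :=
  (∀ t : ℝ, VanishingOn d K R (w t)) ∧
  (∀ n : Fin d → ℤ, ContDiff ℝ 1 fun t : ℝ => w t n) ∧
  ∀ (t : ℝ) (n : Fin d → ℤ),
    Complex.I * deriv (fun s : ℝ => w s n) t =
      -(lapO d K R h (w t) n) + (‖w t n‖ : ℂ) ^ 2 * w t n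

/-! ### The infinite lattice `hℤ^d` -/

/-- Discrete Laplacian `Δ_h` on `hℤ^d`. -/
def lapZ (d : ℕ) (h : ℝ) (f : (Fin d → ℤ) → ℂ) (n : Fin d → ℤ) : ℂ :=
  (1 / (h : ℂ) ^ 2) * ∑ j : Fin d,
    (f (Function.update n j (n j + 1)) + f (Function.update n j (n j - 1)) - 2 * f n)

/-- Operator exponential `e^{itΔ_h} f = Σ_k (itΔ_h)^k f / k!`. -/
def flowZ (d : ℕ) (h t : ℝ) (f : (Fin d → ℤ) → ℂ) (n : Fin d → ℤ) : ℂ :=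
  ∑' k : ℕ, ((Complex.I * (t : ℂ)) ^ k / (Nat.factorial k : ℂ)) * ((lapZ d h)^[k] f n)

/-- `L²(hℤ^d)` norm. -/
def L2Z (d : ℕ) (h : ℝ) (f : (Fin d → ℤ) → ℂ) : ℝ :=
  (h ^ d * ∑' n : Fin d → ℤ, ‖f n‖ ^ 2) ^ (1 / 2 : ℝ)

/-- Membership in `L²(hℤ^d)`. -/
def MemL2Z (d : ℕ) (f : (Fin d → ℤ) → ℂ) : Prop :=
  Summable fun n : Fin d → ℤ => ‖f n‖ ^ 2

/-- `‖∇_h f‖²_{L²(hℤ^d)}` (forward differences). -/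
def gradSqZ (d : ℕ) (h : ℝ) (f : (Fin d → ℤ) → ℂ) : ℝ :=
  h ^ d * ∑' n : Fin d → ℤ, ∑ j : Fin d,
    ‖(f (Function.update n j (n j + 1)) - f n) / (h : ℂ)‖ ^ 2

/-- Weighted norm `‖x f‖_{L²(hℤ^d)}`. -/
def xnormZ (d : ℕ) (h : ℝ) (f : (Fin d → ℤ) → ℂ) : ℝ :=
  (h ^ d * ∑' n : Fin d → ℤ,
      (∑ j : Fin d, (h * (n j : ℝ)) ^ 2) * ‖f n‖ ^ 2) ^ (1 / 2 : ℝ)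

/-- Weighted Sobolev norm `H^{1,1}(hℤ^d)`. -/
def H11Z (d : ℕ) (h : ℝ) (f : (Fin d → ℤ) → ℂ) : ℝ :=
  Real.sqrt ((L2Z d h f) ^ 2 + gradSqZ d h f + (xnormZ d h f) ^ 2)

/-- Membership in `H^{1,1}(hℤ^d)` (all defining sums converge). -/
def MemH11Z (d : ℕ) (h : ℝ) (f : (Fin d → ℤ) → ℂ) : Prop :=
  (Summable fun n : Fin d → ℤ => ‖f n‖ ^ 2) ∧
  (Summable fun n : Fin d → ℤ => ∑ j : Fin d,
      ‖(f (Function.update n j (n j + 1)) - f n) / (h : ℂ)‖ ^ 2) ∧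
  (Summable fun n : Fin d → ℤ =>
      (∑ j : Fin d, (h * (n j : ℝ)) ^ 2) * ‖f n‖ ^ 2)

/-- `v` is a (global, `C¹` in time, `L²`-valued) solution of the discrete NLS
`i ∂_t v = -Δ_h v + |v|² v` on `hℤ^d`. -/
def IsSolutionZ (d : ℕ) (h : ℝ) (v : ℝ → (Fin d → ℤ) → ℂ) : Prop :=
  (∀ t : ℝ, MemL2Z d (v t)) ∧
  (∀ n : Fin d → ℤ, ContDiff ℝ 1 fun t : ℝ => v t n) ∧
  ∀ (t : ℝ) (n : Fin d → ℤ),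
    Complex.I * deriv (fun s : ℝ => v s n) t =
      -(lapZ d h (v t) n) + (‖v t n‖ : ℂ) ^ 2 * v t n


theorem _root_.pow_succ_mul_eq_of_mul_eq_add {R : Type*} [Semiring R] {a x c : R}
    (hax : a * x = x * a + c) (hac : Commute a c) (k : ℕ) :
    a ^ (k + 1) * x = x * a ^ (k + 1) + (k + 1) • (a ^ k * c) := by
  induction k with
  | zero => simp [hax]
  | succ k ih =>
    rw [pow_succ', mul_assoc, ih, mul_add, ← mul_assoc, hax, add_mul, mul_assoc, ← pow_succ',
      mul_smul_comm, ← mul_assoc, ← pow_succ', ← (hac.pow_left (k + 1)).eq, add_assoc,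
      succ_nsmul' _ (k + 1)]

theorem _root_.memℓp_two_iff_summable_sq {α E : Type*} [NormedAddCommGroup E] {g : α → E} :
    Memℓp g 2 ↔ Summable fun n => ‖g n‖ ^ 2 := by
  simp [memℓp_gen_iff (p := 2) (by norm_num)]

theorem _root_.Memℓp.comp_equiv {α β E : Type*} [NormedAddCommGroup E] {p : ℝ≥0∞}
    (hp : 0 < p.toReal) {g : α → E} (hg : Memℓp g p) (e : β ≃ α) : Memℓp (g ∘ e) p :=
  (memℓp_gen_iff hp).2 (e.summable_iff.2 ((memℓp_gen_iff hp).1 hg))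

section Lattice

variable {d : ℕ}

theorem update_add_eq_add_single (n : Fin d → ℤ) (j : Fin d) (c : ℤ) :
    Function.update n j (n j + c) = n + Pi.single j c := by
  ext i
  rcases eq_or_ne i j with rfl | hij <;> simp [*]

def transl (v : Fin d → ℤ) : Module.End ℂ ((Fin d → ℤ) → ℂ) :=
  LinearMap.funLeft ℂ ℂ (· + v)

@[simp] theorem transl_apply (v : Fin d → ℤ) (f : (Fin d → ℤ) → ℂ) (n : Fin d → ℤ) :
    transl v f n = f (n + v) := rfl

theorem commute_transl (v w : Fin d → ℤ) : Commute (transl v) (transl w) := by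
  ext f n
  simp [add_right_comm]

/-- `centralDiff j = 2h D_j`, the undivided centred difference. -/
def centralDiff (j : Fin d) : Module.End ℂ ((Fin d → ℤ) → ℂ) :=
  transl (Pi.single j 1) - transl (-Pi.single j 1)

def lapOp (d : ℕ) (h : ℝ) : Module.End ℂ ((Fin d → ℤ) → ℂ) :=
  ((h : ℂ) ^ 2)⁻¹ • ∑ i : Fin d, (transl (Pi.single i 1) + transl (-Pi.single i 1) - 2)

theorem lapOp_apply (h : ℝ) (f : (Fin d → ℤ) → ℂ) : lapOp d h f = lapZ d h f := by
  ext n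
  simp [lapOp, lapZ, update_add_eq_add_single, sub_eq_add_neg, Pi.single_neg]

theorem lapOp_pow_apply (h : ℝ) (k : ℕ) (f : (Fin d → ℤ) → ℂ) :
    (lapOp d h ^ k) f = (lapZ d h)^[k] f := by
  rw [Module.End.pow_apply, show ⇑(lapOp d h) = lapZ d h from funext (lapOp_apply h)]

theorem commute_lapOp_transl (h : ℝ) (v : Fin d → ℤ) : Commute (lapOp d h) (transl v) :=
  (Commute.sum_left _ _ _ fun _ _ => ((commute_transl _ _).add_left (commute_transl _ _)).sub_left
    (Commute.ofNat_left 2 _)).smul_left _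

theorem commute_lapOp_centralDiff (h : ℝ) (j : Fin d) : Commute (lapOp d h) (centralDiff j) :=
  (commute_lapOp_transl h _).sub_right (commute_lapOp_transl h _)

def coordMul (h : ℝ) (j : Fin d) : Module.End ℂ ((Fin d → ℤ) → ℂ) where
  toFun f n := ((h * (n j : ℝ) : ℝ) : ℂ) * f n
  map_add' f g := by ext n; simp [mul_add]
  map_smul' c f := by ext n; simp [mul_left_comm]

@[simp] theorem coordMul_apply (h : ℝ) (j : Fin d) (f : (Fin d → ℤ) → ℂ) (n : Fin d → ℤ) :
    coordMul h j f n = ((h * (n j : ℝ) : ℝ) : ℂ) * f n := rfl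

theorem transl_mul_coordMul (h : ℝ) (j : Fin d) (v : Fin d → ℤ) :
    transl v * coordMul h j = coordMul h j * transl v + ((h * v j : ℝ) : ℂ) • transl v := by
  ext f n
  simp
  ring

-- For `h = 0` both sides vanish, since `(0 : ℂ)⁻¹ = 0`.
theorem lapOp_mul_coordMul (h : ℝ) (j : Fin d) :
    lapOp d h * coordMul h j = coordMul h j * lapOp d h + (h : ℂ)⁻¹ • centralDiff j := by
  have hterm : ∀ i : Fin d,
      (transl (Pi.single i 1) + transl (-Pi.single i 1) - 2) * coordMul h j
        = coordMul h j * (transl (Pi.single i 1) + transl (-Pi.single i 1) - 2)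
          + ((h * (Pi.single i 1 : Fin d → ℤ) j : ℝ) : ℂ) •
              (transl (Pi.single i 1) - transl (-Pi.single i 1)) := by
    intro i
    simp only [add_mul, sub_mul, transl_mul_coordMul, mul_add, mul_sub, Pi.neg_apply]
    rw [(Commute.ofNat_left 2 _).eq]
    push_cast
    module
  rw [lapOp, smul_mul_assoc, Finset.sum_mul, Finset.sum_congr rfl fun i _ => hterm i,
    Finset.sum_add_distrib, ← Finset.mul_sum, mul_smul_comm, smul_add, centralDiff]
  congr 1
  rw [Finset.sum_eq_single j]
  · rw [Pi.single_eq_same, smul_smul]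
    congr 1
    simpa [sq] using mul_self_mul_inv (h : ℂ)⁻¹
  · intro i _ hij
    simp [hij.symm]
  · simp

theorem lapOp_pow_succ_mul_coordMul (h : ℝ) (j : Fin d) (k : ℕ) :
    lapOp d h ^ (k + 1) * coordMul h j = coordMul h j * lapOp d h ^ (k + 1)
      + ((k + 1 : ℂ) * (h : ℂ)⁻¹) • (lapOp d h ^ k * centralDiff j) := by
  rw [pow_succ_mul_eq_of_mul_eq_add (lapOp_mul_coordMul h j)
    ((commute_lapOp_centralDiff h j).smul_right _) k, mul_smul_comm, ← Nat.cast_smul_eq_nsmul ℂ,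
    smul_smul]
  push_cast
  rfl

theorem memℓp_transl {g : (Fin d → ℤ) → ℂ} (hg : Memℓp g 2) (v : Fin d → ℤ) :
    Memℓp (transl v g) 2 :=
  hg.comp_equiv (by norm_num) (Equiv.addRight v)

theorem memℓp_centralDiff {g : (Fin d → ℤ) → ℂ} (hg : Memℓp g 2) (j : Fin d) :
    Memℓp (centralDiff j g) 2 :=
  (memℓp_transl hg _).sub (memℓp_transl hg _)

abbrev L2Lattice (d : ℕ) := lp (fun _ : Fin d → ℤ => ℂ) 2

def translCLM (v : Fin d → ℤ) : L2Lattice d →L[ℂ] L2Lattice d :=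
  LinearMap.mkContinuous
    { toFun g := ⟨transl v g, memℓp_transl (lp.memℓp g) v⟩
      map_add' _ _ := rfl
      map_smul' _ _ := rfl }
    1 fun g => by
      have hp : 0 < (2 : ℝ≥0∞).toReal := by norm_num
      refine (one_mul ‖g‖).symm ▸ le_of_eq ?_
      rw [lp.norm_eq_tsum_rpow hp, lp.norm_eq_tsum_rpow hp]
      congr 1
      exact (Equiv.addRight v).tsum_eq fun n => ‖g n‖ ^ (2 : ℝ≥0∞).toReal

def lapCLM (d : ℕ) (h : ℝ) : L2Lattice d →L[ℂ] L2Lattice d :=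
  ((h : ℂ) ^ 2)⁻¹ • ∑ i : Fin d, (translCLM (Pi.single i 1) + translCLM (-Pi.single i 1) - 2)

theorem coe_lapCLM_apply (h : ℝ) (g : L2Lattice d) : ⇑(lapCLM d h g) = lapOp d h g := by
  ext n
  simp only [lapCLM, lapOp, smul_apply, lp.coeFn_smul, LinearMap.smul_apply, Pi.smul_apply,
    _root_.sum_apply, LinearMap.sum_apply, lp.coeFn_sum, Finset.sum_apply]
  rfl

theorem coe_lapCLM_pow_apply (h : ℝ) (k : ℕ) (g : L2Lattice d) :
    ⇑((lapCLM d h ^ k) g) = (lapOp d h ^ k) g := by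
  induction k with
  | zero => rfl
  | succ k ih => rw [pow_succ', pow_succ', Module.End.mul_apply, ← ih, ← coe_lapCLM_apply]; rfl

open NormedSpace in
theorem hasSum_flowZ_lp (h t : ℝ) (g : L2Lattice d) (n : Fin d → ℤ) :
    HasSum (fun k : ℕ => ((Complex.I * t) ^ k / (Nat.factorial k : ℂ)) * (lapOp d h ^ k) g n)
      (exp ((Complex.I * t) • lapCLM d h) g n) := by
  have hexp := exp_series_hasSum_exp' (𝕂 := ℂ) ((Complex.I * t) • lapCLM d h)
  have H := ((lp.evalCLM ℂ (fun _ => ℂ) 2 n).comp (ContinuousLinearMap.apply ℂ _ g)).hasSum hexp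
  refine H.congr_fun fun k => ?_
  change _ = (((k.factorial : ℂ)⁻¹ • ((Complex.I * t) • lapCLM d h) ^ k) g) n
  rw [smul_pow, smul_smul, smul_apply, lp.coeFn_smul, Pi.smul_apply, coe_lapCLM_pow_apply,
    smul_eq_mul]
  ring

theorem flowZ_eq_exp (h t : ℝ) (g : L2Lattice d) :
    flowZ d h t g = ⇑(NormedSpace.exp ((Complex.I * t) • lapCLM d h) g) :=
  funext fun n => by
    simpa only [flowZ, lapOp_pow_apply] using (hasSum_flowZ_lp h t g n).tsum_eq

theorem memℓp_flowZ (h t : ℝ) {g : (Fin d → ℤ) → ℂ} (hg : Memℓp g 2) :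
    Memℓp (flowZ d h t g) 2 :=
  flowZ_eq_exp h t ⟨g, hg⟩ ▸ lp.memℓp _

theorem hasSum_flowZ (h t : ℝ) {g : (Fin d → ℤ) → ℂ} (hg : Memℓp g 2) (n : Fin d → ℤ) :
    HasSum (fun k : ℕ => ((Complex.I * t) ^ k / (Nat.factorial k : ℂ)) * (lapOp d h ^ k) g n)
      (flowZ d h t g n) :=
  flowZ_eq_exp h t ⟨g, hg⟩ ▸ hasSum_flowZ_lp h t ⟨g, hg⟩ n

theorem flowZ_sub (h t : ℝ) {f g : (Fin d → ℤ) → ℂ} (hf : Memℓp f 2) (hg : Memℓp g 2) :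
    flowZ d h t (f - g) = flowZ d h t f - flowZ d h t g :=
  funext fun n => (hasSum_flowZ h t (hf.sub hg) n).unique <| by
    simpa only [map_sub, Pi.sub_apply, mul_sub] using
      (hasSum_flowZ h t hf n).sub (hasSum_flowZ h t hg n)

theorem flowZ_transl (h t : ℝ) (v : Fin d → ℤ) (f : (Fin d → ℤ) → ℂ) :
    flowZ d h t (transl v f) = transl v (flowZ d h t f) := by
  ext n
  simp only [flowZ, transl_apply, ← lapOp_pow_apply]
  refine tsum_congr fun k => ?_
  rw [← Module.End.mul_apply, ((commute_lapOp_transl h v).pow_left k).eq]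
  rfl

theorem flowZ_centralDiff (h t : ℝ) (j : Fin d) {f : (Fin d → ℤ) → ℂ} (hf : Memℓp f 2) :
    flowZ d h t (centralDiff j f) = centralDiff j (flowZ d h t f) := by
  rw [centralDiff, LinearMap.sub_apply, flowZ_sub h t (memℓp_transl hf _) (memℓp_transl hf _),
    flowZ_transl, flowZ_transl]
  rfl

theorem flowZ_coordMul (h t : ℝ) (j : Fin d) {f : (Fin d → ℤ) → ℂ} (hf : Memℓp f 2)
    (hxf : Memℓp (coordMul h j f) 2) :
    flowZ d h t (coordMul h j f)
      = coordMul h j (flowZ d h t f) + (Complex.I * t / h) • centralDiff j (flowZ d h t f) := by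
  set c : ℕ → ℂ := fun k => (Complex.I * t) ^ k / (Nat.factorial k : ℂ) with hc
  have hcoeff : ∀ k : ℕ, c (k + 1) * ((k + 1 : ℂ) * (h : ℂ)⁻¹) = Complex.I * t / h * c k := by
    intro k
    simp only [hc, Nat.factorial_succ]
    push_cast
    field_simp
    ring
  ext n
  set x : ℂ := ((h * (n j : ℝ) : ℝ) : ℂ)
  have hterm : ∀ k : ℕ, c (k + 1) * (lapOp d h ^ (k + 1)) (coordMul h j f) n
      = x * (c (k + 1) * (lapOp d h ^ (k + 1)) f n)
        + Complex.I * t / h * (c k * (lapOp d h ^ k) (centralDiff j f) n) := by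
    intro k
    rw [← Module.End.mul_apply, lapOp_pow_succ_mul_coordMul, LinearMap.add_apply,
      LinearMap.smul_apply, Module.End.mul_apply, Module.End.mul_apply, Pi.add_apply,
      Pi.smul_apply, coordMul_apply, smul_eq_mul]
    linear_combination (lapOp d h ^ k) (centralDiff j f) n * hcoeff k
  have H1 := (hasSum_nat_add_iff' 1).2 (hasSum_flowZ h t hxf n)
  have H2 := ((hasSum_nat_add_iff' 1).2 (hasSum_flowZ h t hf n)).mul_left x
  have H3 := (hasSum_flowZ h t (memℓp_centralDiff hf j) n).mul_left (Complex.I * t / h)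
  have key := H1.unique ((H2.add H3).congr_fun hterm)
  simp only [Finset.range_one, Finset.sum_singleton, pow_zero, Nat.factorial_zero, Nat.cast_one,
    div_one, one_mul, Module.End.one_apply, coordMul_apply, flowZ_centralDiff h t j hf] at key
  simp only [Pi.add_apply, coordMul_apply, Pi.smul_apply, smul_eq_mul]
  linear_combination key

end Lattice

theorem stmt15_general (d : ℕ) (h : ℝ)
    (j : Fin d) (f : (Fin d → ℤ) → ℂ)
    (hf : Summable fun n : Fin d → ℤ => ‖f n‖ ^ 2)
    (hxf : Summable fun n : Fin d → ℤ =>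
      ‖((h * (n j : ℝ) : ℝ) : ℂ) * f n‖ ^ 2) (t : ℝ) :
    (Summable fun n : Fin d → ℤ =>
      ‖((h * (n j : ℝ) : ℝ) : ℂ) * flowZ d h t f n‖ ^ 2) ∧
    ∀ n : Fin d → ℤ,
      ((h * (n j : ℝ) : ℝ) : ℂ) * flowZ d h t f n
          - flowZ d h t (fun n' => ((h * (n' j : ℝ) : ℝ) : ℂ) * f n') n
        = (-2 : ℂ) * Complex.I * (t : ℂ) *
            ((flowZ d h t f (Function.update n j (n j + 1))
              - flowZ d h t f (Function.update n j (n j - 1))) / (2 * (h : ℂ))) := by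
  have hf₂ : Memℓp f 2 := memℓp_two_iff_summable_sq.2 hf
  have hxf₂ : Memℓp (coordMul h j f) 2 := memℓp_two_iff_summable_sq.2 hxf
  have hcomm := flowZ_coordMul h t j hf₂ hxf₂
  refine ⟨memℓp_two_iff_summable_sq.1 ?_, fun n => ?_⟩
  · change Memℓp (coordMul h j (flowZ d h t f)) 2
    rw [eq_sub_of_add_eq hcomm.symm]
    exact (memℓp_flowZ h t hxf₂).sub
      ((memℓp_centralDiff (memℓp_flowZ h t hf₂) j).const_smul _)
  · have hcomm_n := congrFun hcomm n
    simp only [Pi.add_apply, coordMul_apply, Pi.smul_apply, smul_eq_mul, centralDiff,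
      LinearMap.sub_apply, Pi.sub_apply, transl_apply] at hcomm_n
    rw [sub_eq_add_neg (n j), update_add_eq_add_single, update_add_eq_add_single, Pi.single_neg]
    change _ - flowZ d h t (coordMul h j f) n = _
    rw [hcomm_n]
    ring

/-- commutator identity on `hℤ^d`:
`x_j e^{itΔ_h} f - e^{itΔ_h}(x_j f) = -2it · D_j(e^{itΔ_h} f)` with `D_j` the centered
difference, and `x_j e^{itΔ_h} f ∈ L²(hℤ^d)` whenever `f, x_j f ∈ L²(hℤ^d)`. -/
theorem stmt15 (d : ℕ) (hd : 1 ≤ d) (h : ℝ) (hh0 : 0 < h) (hh1 : h ≤ 1)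
    (j : Fin d) (f : (Fin d → ℤ) → ℂ)
    (hf : Summable fun n : Fin d → ℤ => ‖f n‖ ^ 2)
    (hxf : Summable fun n : Fin d → ℤ =>
      ‖((h * (n j : ℝ) : ℝ) : ℂ) * f n‖ ^ 2) (t : ℝ) :
    (Summable fun n : Fin d → ℤ =>
      ‖((h * (n j : ℝ) : ℝ) : ℂ) * flowZ d h t f n‖ ^ 2) ∧
    ∀ n : Fin d → ℤ,
      ((h * (n j : ℝ) : ℝ) : ℂ) * flowZ d h t f n
          - flowZ d h t (fun n' => ((h * (n' j : ℝ) : ℝ) : ℂ) * f n') n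
        = (-2 : ℂ) * Complex.I * (t : ℂ) *
            ((flowZ d h t f (Function.update n j (n j + 1))
              - flowZ d h t f (Function.update n j (n j - 1))) / (2 * (h : ℂ))) :=
  stmt15_general d h j f hf hxf t

end DNLS
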